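/- Let G be the directed graph with two vertices v, w and four edges g₁,…,g₄ where r(g₁)=s(g₁)=r(g₂)=s(g₂)=r(g₃)=v, s(g₃)=r(g₄)=s(g₄)=w. Then the graph C*-algebras C*(G) and C*(G^{op}) are not isomorphic: C*(G^{op}) admits a nonzero one-dimensional representation, while every nonzero representation of C*(G) restricts to a nonzero representation of the corner p_v C*(G) p_v, which contains a copy of the Cuntz algebra O₂ and hence admits no one-dimensional representation. -/

import Mathlib

/-!
STATEMENT 9: For the graph G with vertices v, w and edges g₁,…,g₄ with
r(g₁)=s(g₁)=r(g₂)=s(g₂)=r(g₃)=v, s(g₃)=r(g₄)=s(g₄)=w, the graph C*-algebras C*(G) and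
C*(G^op) are not isomorphic: C*(G^op) admits a nonzero one-dimensional representation
(π(p_w)=π(S_{g₄^op})=1, zero on the other generators), while C*(G) admits none.
Graph algebras are modelled by their universal property for Cuntz–Krieger families.
-/

/-- The two vertices. -/
inductive Vtx : Type
  | v : Vtx
  | w : Vtx
deriving DecidableEq

instance : Fintype Vtx := ⟨{Vtx.v, Vtx.w}, fun x => by cases x <;> simp⟩

/-- Range map of G. -/
def rG : Fin 4 → Vtx := ![Vtx.v, Vtx.v, Vtx.v, Vtx.w]

/-- Source map of G. -/
def sG : Fin 4 → Vtx := ![Vtx.v, Vtx.v, Vtx.w, Vtx.w]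

/-- A (unital) Cuntz–Krieger family for the graph with range map `rr` and source map
`ss`, in a complex *-algebra `B`: conventions `S_e* S_e = p_{s(e)}`,
`p_x = Σ_{r(e)=x} S_e S_e*`, and `Σ_x p_x = 1`. -/
structure CKFam (rr ss : Fin 4 → Vtx) (B : Type) [Ring B] [StarRing B] [Algebra ℂ B] where
  S : Fin 4 → B
  P : Vtx → B
  hPorth : ∀ x y, P x * P y = if x = y then P x else 0
  hPstar : ∀ x, star (P x) = P x
  hSS : ∀ g, star (S g) * S g = P (ss g)
  hCK : ∀ x, P x = ∑ g : Fin 4, if rr g = x then S g * star (S g) else 0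
  hsum : P Vtx.v + P Vtx.w = 1

/-- Universality of a Cuntz–Krieger family: every Cuntz–Krieger family in any complex
*-algebra factors uniquely through a star-algebra homomorphism. -/
def IsUniversalCK (rr ss : Fin 4 → Vtx) (B : Type) [Ring B] [StarRing B] [Algebra ℂ B]
    (F : CKFam rr ss B) : Prop :=
  ∀ (D : Type) [Ring D] [StarRing D] [Algebra ℂ D] (F' : CKFam rr ss D),
    ∃! φ : B →⋆ₐ[ℂ] D, (∀ g, φ (F.S g) = F'.S g) ∧ (∀ x, φ (F.P x) = F'.P x)

/-!
In a commutative target the Cuntz–Krieger relation at `v` becomes `p_v = p_v + p_v + p_w`,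
since `S_e S_e* = S_e* S_e = p_{s(e)}` and `g₁, g₂, g₃` have sources `v, v, w`. Hence
`p_v + p_w = 0`, contradicting `p_v + p_w = 1`: `C*(G)` has no character. The reversed graph has
one, supported on the loop at `w`, and an isomorphism `C*(G) ≃ C*(G^op)` would pull it back to a
character of `C*(G)`.
-/

namespace CKFam

variable {rr ss : Fin 4 → Vtx}

def map {B D : Type} [Ring B] [StarRing B] [Algebra ℂ B] [Ring D] [StarRing D] [Algebra ℂ D]
    (F : CKFam rr ss B) (ψ : B →⋆ₐ[ℂ] D) : CKFam rr ss D where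
  S g := ψ (F.S g)
  P x := ψ (F.P x)
  hPorth x y := by rw [← map_mul, F.hPorth]; split <;> simp
  hPstar x := by rw [← map_star, F.hPstar]
  hSS g := by rw [← map_star, ← map_mul, F.hSS]
  hCK x := by
    simp only [F.hCK x, map_sum, apply_ite ψ, map_mul, map_star, map_zero]
  hsum := by rw [← map_add, F.hsum, map_one]

theorem mul_star_self_of_comm {B : Type} [CommRing B] [StarRing B] [Algebra ℂ B]
    (F : CKFam rr ss B) (g : Fin 4) : F.S g * star (F.S g) = F.P (ss g) := by
  rw [mul_comm, F.hSS]

theorem subsingleton_of_rG_sG {B : Type} [CommRing B] [StarRing B] [Algebra ℂ B]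
    (F : CKFam rG sG B) : Subsingleton B := by
  have hv : F.P Vtx.v = F.P Vtx.v + F.P Vtx.v + F.P Vtx.w := by
    conv_lhs => rw [F.hCK]
    simp [Fin.sum_univ_four, rG, sG, F.mul_star_self_of_comm]
  exact subsingleton_of_zero_eq_one (by linear_combination hv + F.hsum)

end CKFam

theorem isEmpty_ckFam_rG_sG_of_nontrivial (B : Type) [CommRing B] [Nontrivial B] [StarRing B]
    [Algebra ℂ B] : IsEmpty (CKFam rG sG B) :=
  ⟨fun F => not_subsingleton B F.subsingleton_of_rG_sG⟩

def opCharacter : CKFam sG rG ℂ where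
  S := ![0, 0, 0, 1]
  P := fun | Vtx.v => 0 | Vtx.w => 1
  hPorth x y := by cases x <;> cases y <;> simp
  hPstar x := by cases x <;> simp
  hSS g := by fin_cases g <;> simp [rG]
  hCK x := by cases x <;> simp [Fin.sum_univ_four, sG]
  hsum := by simp

theorem graph_and_opposite_not_isomorphic_general
    (B C : Type) [Ring B] [StarRing B] [Algebra ℂ B] [Ring C] [StarRing C] [Algebra ℂ C]
    -- B = C*(G) via a universal Cuntz–Krieger G-family
    (FB : CKFam rG sG B)
    -- C = C*(G^op) via a universal Cuntz–Krieger G^op-family (ranges and sources swap)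
    (FC : CKFam sG rG C) (hC : IsUniversalCK sG rG C FC) :
    -- C*(G^op) has a one-dimensional representation with π(p_w) = π(S_{g₄}) = 1 and
    -- π = 0 on the other generators ...
    (∃ F : CKFam sG rG ℂ, F.P Vtx.w = 1 ∧ F.S 3 = 1 ∧ F.P Vtx.v = 0 ∧
      F.S 0 = 0 ∧ F.S 1 = 0 ∧ F.S 2 = 0) ∧
    -- ... while C*(G) has no one-dimensional representation ...
    IsEmpty (CKFam rG sG ℂ) ∧
    -- ... and therefore C*(G) and C*(G^op) are not isomorphic
    IsEmpty (B ≃⋆ₐ[ℂ] C) := by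
  have noCharacter := isEmpty_ckFam_rG_sG_of_nontrivial ℂ
  refine ⟨⟨opCharacter, rfl, rfl, rfl, rfl, rfl, rfl⟩, noCharacter, ⟨fun e => ?_⟩⟩
  obtain ⟨χ, -⟩ := hC ℂ opCharacter
  exact noCharacter.false (FB.map (χ.comp (e : B →⋆ₐ[ℂ] C)))

theorem graph_and_opposite_not_isomorphic
    (B C : Type) [Ring B] [StarRing B] [Algebra ℂ B] [Ring C] [StarRing C] [Algebra ℂ C]
    -- B = C*(G) via a universal Cuntz–Krieger G-family
    (FB : CKFam rG sG B) (hB : IsUniversalCK rG sG B FB)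
    -- C = C*(G^op) via a universal Cuntz–Krieger G^op-family (ranges and sources swap)
    (FC : CKFam sG rG C) (hC : IsUniversalCK sG rG C FC) :
    -- C*(G^op) has a one-dimensional representation with π(p_w) = π(S_{g₄}) = 1 and
    -- π = 0 on the other generators ...
    (∃ F : CKFam sG rG ℂ, F.P Vtx.w = 1 ∧ F.S 3 = 1 ∧ F.P Vtx.v = 0 ∧
      F.S 0 = 0 ∧ F.S 1 = 0 ∧ F.S 2 = 0) ∧
    -- ... while C*(G) has no one-dimensional representation ...
    IsEmpty (CKFam rG sG ℂ) ∧
    -- ... and therefore C*(G) and C*(G^op) are not isomorphic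
    IsEmpty (B ≃⋆ₐ[ℂ] C) :=
  graph_and_opposite_not_isomorphic_general B C FB FC hC
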